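/- For any ε > 0 and any integer n > 1, consider the n × (n+1) game with u₁(i,j) = 1 − ε for i ≠ j ≤ n, u₁(i,i) = 1, u₁(i,n+1) = 0, u₂(i,j) = 1 for i ≠ j ≤ n, u₂(i,i) = 0, u₂(i,n+1) = (n − 1/2)/n. In every correlated equilibrium of this game, the column player puts probability 1 on column n+1; hence the row player's expected utility in every correlated equilibrium is 0. -/
import Mathlib


open Finset

/-- Row payoffs of the game of Proposition `closetonone`:
u₁(i,j) = 1 − ε for i ≠ j ≤ n, u₁(i,i) = 1, u₁(i,n+1) = 0. -/
noncomputable def hU1 (n : ℕ) (ε : ℝ) : Fin n → Fin (n+1) → ℝ := fun i j =>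
  if (j : ℕ) < n then (if (j : ℕ) = (i : ℕ) then 1 else 1 - ε) else 0

/-- Column payoffs: u₂(i,j) = 1 for i ≠ j ≤ n, u₂(i,i) = 0,
u₂(i,n+1) = (n − 1/2)/n. -/
noncomputable def hU2 (n : ℕ) : Fin n → Fin (n+1) → ℝ := fun i j =>
  if (j : ℕ) < n then (if (j : ℕ) = (i : ℕ) then 0 else 1)
  else ((n : ℝ) - 1/2) / n

/-- in every correlated equilibrium of this game, the column
player puts probability 1 on column n+1 (so every other column gets
probability 0), and hence the row player's expected utility is 0. -/
theorem no_commitment_correlated_equilibrium_value_zero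
    (n : ℕ) (hn : 1 < n) (ε : ℝ) (hε : 0 < ε)
    (σ : Fin n → Fin (n+1) → ℝ)
    (hpos : ∀ r c, 0 ≤ σ r c) (hsum : ∑ r, ∑ c, σ r c = 1)
    (hrow : ∀ r r' : Fin n, 0 ≤ ∑ c, σ r c * (hU1 n ε r c - hU1 n ε r' c))
    (hcol : ∀ c c' : Fin (n+1), 0 ≤ ∑ r, σ r c * (hU2 n r c - hU2 n r c')) :
    (∀ c : Fin (n+1), (c : ℕ) < n → ∑ r, σ r c = 0) ∧
    ∑ r, ∑ c, σ r c * hU1 n ε r c = 0 := by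
  have hn0 : (0:ℝ) < n := by positivity
  -- Row incentive: σ r c ≤ σ r r on columns < n
  have hA : ∀ r c : Fin n, σ r c.castSucc ≤ σ r r.castSucc := by
    intro r c
    have key : ∑ j, σ r j * (hU1 n ε r j - hU1 n ε c j)
        = ε * σ r r.castSucc - ε * σ r c.castSucc := by
      rw [Fin.sum_univ_castSucc]
      have hlast : hU1 n ε r (Fin.last n) - hU1 n ε c (Fin.last n) = 0 := by
        simp [hU1]
      rw [hlast, mul_zero, add_zero]
      have : ∀ j : Fin n,
          σ r j.castSucc * (hU1 n ε r j.castSucc - hU1 n ε c j.castSucc)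
          = (if j = r then ε * σ r j.castSucc else 0)
            - (if j = c then ε * σ r j.castSucc else 0) := by
        intro j
        simp only [hU1, Fin.coe_castSucc, Fin.val_eq_val, if_pos j.isLt]
        split_ifs <;> ring
      rw [Finset.sum_congr rfl (fun j _ => this j), Finset.sum_sub_distrib,
        Finset.sum_ite_eq' univ r, Finset.sum_ite_eq' univ c]
      simp
    have h := hrow r c
    rw [key] at h
    nlinarith
  -- Column incentive vs last column
  have hB : ∀ c : Fin n, 2 * (n:ℝ) * σ c c.castSucc ≤ ∑ r, σ r c.castSucc := by
    intro c
    have key : ∑ r, σ r c.castSucc * (hU2 n r c.castSucc - hU2 n r (Fin.last n))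
        = (1 / (2*n)) * ∑ r, σ r c.castSucc - σ c c.castSucc := by
      rw [Finset.mul_sum]
      have hne : (n:ℝ) ≠ 0 := ne_of_gt hn0
      have : ∀ r : Fin n,
          σ r c.castSucc * (hU2 n r c.castSucc - hU2 n r (Fin.last n))
          = 1/(2*n) * σ r c.castSucc - (if c = r then σ r c.castSucc else 0) := by
        intro r
        simp only [hU2, Fin.coe_castSucc, Fin.val_eq_val, if_pos c.isLt,
          Fin.val_last, if_neg (lt_irrefl n)]
        split_ifs <;> field_simp <;> ring
      rw [Finset.sum_congr rfl (fun r _ => this r), Finset.sum_sub_distrib,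
        Finset.sum_ite_eq univ c]
      simp
    have h := hcol c.castSucc (Fin.last n)
    rw [key] at h
    have h2n : (0:ℝ) < 2*n := by positivity
    have h' : σ c c.castSucc ≤ 1/(2*(n:ℝ)) * ∑ r, σ r c.castSucc := by linarith
    calc 2*(n:ℝ) * σ c c.castSucc ≤ 2*(n:ℝ) * (1/(2*(n:ℝ)) * ∑ r, σ r c.castSucc) :=
          mul_le_mul_of_nonneg_left h' (le_of_lt h2n)
      _ = ∑ r, σ r c.castSucc := by field_simp
  set S := ∑ r : Fin n, σ r r.castSucc with hS
  have hSnn : 0 ≤ S := Finset.sum_nonneg fun r _ => hpos r r.castSucc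
  have hM1 : ∑ r : Fin n, ∑ c : Fin n, σ r c.castSucc ≤ (n:ℝ) * S := by
    rw [hS, Finset.mul_sum]
    refine Finset.sum_le_sum fun r _ => ?_
    calc ∑ c : Fin n, σ r c.castSucc ≤ ∑ _c : Fin n, σ r r.castSucc :=
          Finset.sum_le_sum fun c _ => hA r c
      _ = (n:ℝ) * σ r r.castSucc := by simp [mul_comm]
  have hM2 : 2 * (n:ℝ) * S ≤ ∑ r : Fin n, ∑ c : Fin n, σ r c.castSucc := by
    rw [Finset.sum_comm, hS, Finset.mul_sum]
    exact Finset.sum_le_sum fun c _ => hB c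
  have hS0 : S = 0 := le_antisymm (by nlinarith) hSnn
  have hdiag0 : ∀ r : Fin n, σ r r.castSucc = 0 := by
    have := (Finset.sum_eq_zero_iff_of_nonneg
      (fun r _ => hpos r r.castSucc)).mp hS0
    exact fun r => this r (mem_univ r)
  have hzero : ∀ (r c : Fin n), σ r c.castSucc = 0 := fun r c =>
    le_antisymm (by rw [← hdiag0 r]; exact hA r c) (hpos r c.castSucc)
  constructor
  · intro c hc
    have hceq : c = (⟨(c:ℕ), hc⟩ : Fin n).castSucc := by
      apply Fin.ext; simp
    rw [hceq]
    exact Finset.sum_eq_zero fun r _ => hzero r _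
  · refine Finset.sum_eq_zero fun r _ => ?_
    rw [Fin.sum_univ_castSucc]
    have hlast : hU1 n ε r (Fin.last n) = 0 := by simp [hU1]
    rw [hlast, mul_zero, add_zero]
    exact Finset.sum_eq_zero fun c _ => by rw [hzero r c, zero_mul]
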